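/- For a partition λ and an addable box s ∈ A_λ, the transition/co-transition measures satisfy Σ_{t ∈ R⁺_λ} ℏ·τ̃_λ^t / ([s-t]·[s-t+(1,1)]) = -ℏ + τ̃_{λ+s}^{s+(1,1)}, where τ̃_μ^t = Res_{u=[t]} (u·T_μ(u)^{-1}) for t ∈ R⁺_μ, and T_μ(u) = u·∏_{t∈R⁺_μ}(u-[t])/∏_{a∈A_μ}(u-[a]). -/

import Mathlib

noncomputable section

/-- The coefficient field `ℂ(ε₁,ε₂)`, realized as the fraction field of a polynomial
ring in two (transcendental) variables. -/
abbrev Kf : Type := FractionRing (MvPolynomial (Fin 2) ℚ)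

/-- The equivariant parameter `ε₁`. -/
def eps1 : Kf := algebraMap (MvPolynomial (Fin 2) ℚ) Kf (MvPolynomial.X 0)

/-- The equivariant parameter `ε₂`. -/
def eps2 : Kf := algebraMap (MvPolynomial (Fin 2) ℚ) Kf (MvPolynomial.X 1)

/-- The content `[b] = b₁ε₁ + b₂ε₂` of a box `b`. -/
def content (b : ℕ × ℕ) : Kf := (b.1 : Kf) * eps1 + (b.2 : Kf) * eps2

/-- The set `A_Y` of addable boxes (inner corners) of a Young diagram `Y`. -/
def addables (Y : YoungDiagram) : Finset (ℕ × ℕ) :=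
  ((Finset.range (Y.cells.card + 1)) ×ˢ (Finset.range (Y.cells.card + 1))).filter
    (fun c => c ∉ Y.cells ∧ (c.1 = 0 ∨ (c.1 - 1, c.2) ∈ Y.cells) ∧
      (c.2 = 0 ∨ (c.1, c.2 - 1) ∈ Y.cells))

/-- The set `R_Y` of removable boxes of a Young diagram `Y`. -/
def removables (Y : YoungDiagram) : Finset (ℕ × ℕ) :=
  Y.cells.filter fun c => (c.1 + 1, c.2) ∉ Y.cells ∧ (c.1, c.2 + 1) ∉ Y.cells

/-- The set `R⁺_Y = {t + (1,1) : t ∈ R_Y}` of outer corners of `Y`. -/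
def outers (Y : YoungDiagram) : Finset (ℕ × ℕ) :=
  (removables Y).image fun c => (c.1 + 1, c.2 + 1)

/-- Kerov's co-transition measure
`τ_Y^a = ∏_{t∈R⁺_Y}[a-t] / ∏_{a'∈A_Y, a'≠a}[a-a']` at an addable box `a`. -/
def tau (Y : YoungDiagram) (a : ℕ × ℕ) : Kf :=
  (∏ t ∈ outers Y, (content a - content t)) /
    ∏ a' ∈ (addables Y).erase a, (content a - content a')

/-- The quantum parameter `ℏ = -ε₁ε₂`. -/
def hbar : Kf := -eps1 * eps2

/-- Kerov's transition measure `τ̃_Y^t = Res_{u=[t]} (u·T_Y(u)⁻¹)` at an outer corner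
`t ∈ R⁺_Y`, where `T_Y(u) = u·∏_{t'∈R⁺_Y}(u-[t'])/∏_{a∈A_Y}(u-[a])`; explicitly it is
(up to the paper's sign convention) `∏_{a∈A_Y}[t-a] / ∏_{t'∈R⁺_Y, t'≠t}[t-t']`. -/
def ttau (Y : YoungDiagram) (t : ℕ × ℕ) : Kf :=
  -(∏ a ∈ addables Y, (content t - content a)) /
    ∏ t' ∈ (outers Y).erase t, (content t - content t')

/-! With `P(u) = ∏_{a ∈ A_λ} (u - [a])` and `Q(u) = ∏_{t ∈ R⁺_λ} (u - [t])`, the numbers `τ̃_λ^t` are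
the coefficients of the partial fraction expansion `u - P(u)/Q(u) = Σ_t τ̃_λ^t / (u - [t])`. It is
an expansion of a proper rational function because `|A_λ| = |R⁺_λ| + 1` and
`Σ_{a ∈ A_λ} [a] = Σ_{t ∈ R⁺_λ} [t]`, which hold for the empty diagram and are preserved when a
box is added. Splitting `ℏ / ([s-t] [s-t+(1,1)])` into partial fractions in `[t]` turns the left
side into `ℏ/(ε₁+ε₂)` times the difference of this expansion at `u = [s]`, where `P` vanishes,
and at `u = [s+(1,1)]`. Adding `s` changes `A` and `R⁺` only at `s`, `s+(1,0)`, `s+(0,1)` and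
`s+(1,1)`, which identifies the leftover `P/Q` at `[s+(1,1)]` with `τ̃_{λ+s}^{s+(1,1)}`. -/
open Finset

open Polynomial in
theorem Polynomial.Monic.degree_sub_lt_of_nextCoeff_eq {R : Type*} [CommRing R] {p q : R[X]}
    (hp : p.Monic) (hq : q.Monic) (hdeg : p.natDegree = q.natDegree)
    (hnext : p.nextCoeff = q.nextCoeff) : (p - q).degree < (p.natDegree - 1 : ℕ) := by
  rw [degree_lt_iff_coeff_zero]
  intro m hm
  rw [coeff_sub, sub_eq_zero]
  rcases lt_trichotomy m p.natDegree with h | rfl | h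
  · have hpos : 0 < p.natDegree := by omega
    obtain rfl : m = p.natDegree - 1 := by omega
    rw [← nextCoeff_of_natDegree_pos hpos, hnext, hdeg, nextCoeff_of_natDegree_pos (hdeg ▸ hpos)]
  · rw [hp.coeff_natDegree, hdeg, hq.coeff_natDegree]
  · rw [coeff_eq_zero_of_natDegree_lt h, coeff_eq_zero_of_natDegree_lt (hdeg ▸ h)]

open Polynomial Lagrange in
theorem sum_neg_div_sub_eq_sub_div_prod {K ι κ : Type*} [Field K] [DecidableEq κ]
    {A : Finset ι} {T : Finset κ} (a : ι → K) (t : κ → K) (ht : Set.InjOn t T)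
    (hcard : #A = #T + 1) (hsum : ∑ i ∈ A, a i = ∑ k ∈ T, t k) {v : K}
    (hv : ∀ k ∈ T, v ≠ t k) :
    ∑ k ∈ T, -(∏ i ∈ A, (t k - a i)) / (∏ l ∈ T.erase k, (t k - t l)) / (v - t k) =
      v - (∏ i ∈ A, (v - a i)) / ∏ k ∈ T, (v - t k) := by
  -- `D` has degree `< #T`, so it is the Lagrange interpolant of its values `∏ (t k - a i)`.
  set D := nodal A a - X * nodal T t
  have hdeg : D.degree < ((#T : ℕ) : WithBot ℕ) := by
    have hQ : (X * nodal T t).Monic := monic_X.mul nodal_monic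
    have := (nodal_monic (s := A) (v := a)).degree_sub_lt_of_nextCoeff_eq hQ ?_ ?_
    · simpa [natDegree_nodal, hcard] using this
    · rw [natDegree_nodal, natDegree_X_mul nodal_monic.ne_zero, natDegree_nodal, hcard]
    · rw [monic_X.nextCoeff_mul nodal_monic, nodal, nodal, prod_X_sub_C_nextCoeff,
        prod_X_sub_C_nextCoeff, hsum]
      simpa using nextCoeff_X_add_C (0 : K)
  have hD_node : ∀ k ∈ T, D.eval (t k) = ∏ i ∈ A, (t k - a i) := fun k hk => by
    simp [D, eval_nodal_at_node hk, eval_nodal]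
  have hQv : ∏ k ∈ T, (v - t k) ≠ 0 := by
    simpa only [eval_nodal] using eval_nodal_not_at_node hv
  have hinterp := congrArg (eval v) (eq_interpolate ht hdeg)
  rw [eval_interpolate_not_at_node _ hv, eval_nodal] at hinterp
  calc ∑ k ∈ T, -(∏ i ∈ A, (t k - a i)) / (∏ l ∈ T.erase k, (t k - t l)) / (v - t k)
      = -∑ k ∈ T, nodalWeight T t k * (v - t k)⁻¹ * D.eval (t k) := by
        rw [← sum_neg_distrib]
        refine sum_congr rfl fun k hk => ?_
        rw [hD_node k hk, nodalWeight, prod_inv_distrib]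
        ring
    _ = -(D.eval v / ∏ k ∈ T, (v - t k)) := by rw [hinterp, mul_div_cancel_left₀ _ hQv]
    _ = v - (∏ i ∈ A, (v - a i)) / ∏ k ∈ T, (v - t k) := by
        simp only [D, eval_sub, eval_mul, eval_X, eval_nodal]
        field_simp
        ring

open MvPolynomial in
theorem content_injective : Function.Injective content := by
  intro b c h
  have hpoly : ∀ d : ℕ × ℕ, content d =
      algebraMap (MvPolynomial (Fin 2) ℚ) Kf (C (d.1 : ℚ) * X 0 + C (d.2 : ℚ) * X 1) := by
    intro d
    simp [content, eps1, eps2]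
  rw [hpoly, hpoly] at h
  have h' := IsFractionRing.injective (MvPolynomial (Fin 2) ℚ) Kf h
  have h0 := congrArg (eval ![1, 0]) h'
  have h1 := congrArg (eval ![0, 1]) h'
  simp only [map_add, map_mul, eval_C, eval_X] at h0 h1
  simp only [Fin.isValue, Matrix.cons_val_zero, Matrix.cons_val_one, mul_one, mul_zero,
    add_zero, zero_add, Nat.cast_inj] at h0 h1
  exact Prod.ext h0 h1

theorem content_sub_ne_zero {b c : ℕ × ℕ} (h : b ≠ c) : content b - content c ≠ 0 :=
  sub_ne_zero.mpr (content_injective.ne h)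

theorem eps1_add_eps2_ne_zero : eps1 + eps2 ≠ 0 := by
  simpa [content] using content_injective.ne (a₁ := (1, 1)) (a₂ := (0, 0)) (by decide)

theorem YoungDiagram.fst_lt_card {Y : YoungDiagram} {c : ℕ × ℕ} (h : c ∈ Y) :
    c.1 < #Y.cells := by
  have hsub : (range (c.1 + 1)).image (fun k => (k, c.2)) ⊆ Y.cells := by
    simp only [subset_iff, mem_image, mem_range]
    rintro _ ⟨k, hk, rfl⟩
    exact Y.up_left_mem (Nat.le_of_lt_succ hk) le_rfl h
  simpa [card_image_of_injective _ (fun a b hab => (Prod.mk.inj hab).1)] using card_le_card hsub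

theorem YoungDiagram.snd_lt_card {Y : YoungDiagram} {c : ℕ × ℕ} (h : c ∈ Y) :
    c.2 < #Y.cells := by
  simpa [YoungDiagram.transpose] using Y.transpose.fst_lt_card (c := c.swap) (by simpa using h)

theorem mem_addables_iff {Y : YoungDiagram} {c : ℕ × ℕ} :
    c ∈ addables Y ↔
      c ∉ Y ∧ (c.1 = 0 ∨ (c.1 - 1, c.2) ∈ Y) ∧ (c.2 = 0 ∨ (c.1, c.2 - 1) ∈ Y) := by
  refine ⟨fun h => (mem_filter.mp h).2, fun h => mem_filter.mpr ⟨?_, h⟩⟩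
  obtain ⟨-, h1, h2⟩ := h
  have hc1 : c.1 < #Y.cells + 1 := by
    rcases h1 with h1 | h1
    · omega
    · have := Y.fst_lt_card h1; simp only at this; omega
  have hc2 : c.2 < #Y.cells + 1 := by
    rcases h2 with h2 | h2
    · omega
    · have := Y.snd_lt_card h2; simp only at this; omega
  exact mem_product.mpr ⟨mem_range.mpr hc1, mem_range.mpr hc2⟩

theorem mem_outers_iff {Y : YoungDiagram} {c : ℕ × ℕ} :
    c ∈ outers Y ↔ c.1 ≠ 0 ∧ c.2 ≠ 0 ∧
      (c.1 - 1, c.2 - 1) ∈ Y ∧ (c.1, c.2 - 1) ∉ Y ∧ (c.1 - 1, c.2) ∉ Y := by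
  simp only [outers, removables, mem_image, mem_filter, YoungDiagram.mem_cells]
  constructor
  · rintro ⟨⟨p, q⟩, ⟨hm, h1, h2⟩, rfl⟩
    simpa using ⟨hm, h1, h2⟩
  · rintro ⟨h1, h2, hm, hx, hy⟩
    refine ⟨(c.1 - 1, c.2 - 1), ⟨hm, ?_, ?_⟩, ?_⟩
    · simpa [Nat.sub_add_cancel (Nat.pos_of_ne_zero h1)] using hx
    · simpa [Nat.sub_add_cancel (Nat.pos_of_ne_zero h2)] using hy
    · ext <;> simp <;> omega

theorem addables_bot : addables ⊥ = {(0, 0)} := by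
  ext ⟨_ | p, _ | q⟩ <;> simp [mem_addables_iff]

theorem outers_bot : outers ⊥ = ∅ := by
  simp [outers, removables]

theorem disjoint_addables_outers (Y : YoungDiagram) : Disjoint (addables Y) (outers Y) := by
  rw [disjoint_left]
  rintro ⟨_ | p, _ | q⟩ <;> simp [mem_addables_iff, mem_outers_iff]
  tauto

section AddBox

variable {Y Y' : YoungDiagram} {s : ℕ × ℕ}

theorem YoungDiagram.mem_iff_of_cells_eq_insert (hY' : Y'.cells = insert s Y.cells)
    (c : ℕ × ℕ) : c ∈ Y' ↔ c = s ∨ c ∈ Y := by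
  rw [← YoungDiagram.mem_cells, hY', mem_insert, YoungDiagram.mem_cells]

theorem addables_of_cells_eq_insert (hs : s ∈ addables Y) (hY' : Y'.cells = insert s Y.cells) :
    addables Y' = (addables Y).erase s ∪ ({(s.1 + 1, s.2), (s.1, s.2 + 1)} \ outers Y) := by
  obtain ⟨i, j⟩ := s
  have hlower : ∀ a b c d, a ≤ c → b ≤ d → (c, d) ∈ Y → (a, b) ∈ Y :=
    fun _ _ _ _ => Y.up_left_mem
  rw [mem_addables_iff] at hs
  -- Splitting off zero coordinates removes every truncated subtraction; what is left is
  -- propositional logic, linear arithmetic and `hlower`.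
  ext ⟨_ | p, _ | q⟩ <;> rcases i with _ | i <;> rcases j with _ | j <;>
    simp only [mem_addables_iff, mem_outers_iff, YoungDiagram.mem_iff_of_cells_eq_insert hY',
      mem_insert, mem_union, mem_erase, mem_sdiff, mem_singleton, Prod.mk.injEq, ne_eq,
      Nat.add_sub_cancel] at hs ⊢ <;>
    grind

theorem outers_of_cells_eq_insert (hs : s ∉ Y) (hY' : Y'.cells = insert s Y.cells) :
    outers Y' = insert (s.1 + 1, s.2 + 1) (outers Y \ {(s.1 + 1, s.2), (s.1, s.2 + 1)}) := by
  obtain ⟨i, j⟩ := s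
  have hlower : ∀ a b c d, a ≤ c → b ≤ d → (c, d) ∈ Y → (a, b) ∈ Y :=
    fun _ _ _ _ => Y.up_left_mem
  ext ⟨_ | p, _ | q⟩ <;>
    simp only [mem_outers_iff, YoungDiagram.mem_iff_of_cells_eq_insert hY',
      mem_insert, mem_sdiff, mem_singleton, Prod.mk.injEq, ne_eq, Nat.add_sub_cancel] <;>
    grind

theorem add_one_add_one_notMem_outers (hs : s ∉ Y) : (s.1 + 1, s.2 + 1) ∉ outers Y := by
  simp [mem_outers_iff, hs]

theorem disjoint_addables_succ (hs : s ∉ Y) :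
    Disjoint (addables Y) {(s.1 + 1, s.2), (s.1, s.2 + 1)} := by
  rw [disjoint_right]
  intro c hc
  rcases mem_insert.mp hc with rfl | hc
  · simp [mem_addables_iff, hs]
  · simp [mem_singleton.mp hc, mem_addables_iff, hs]

@[to_additive]
theorem prod_addables_of_cells_eq_insert {M : Type*} [CommMonoid M] (g : ℕ × ℕ → M)
    (hs : s ∈ addables Y) (hY' : Y'.cells = insert s Y.cells) :
    (∏ c ∈ addables Y', g c) * g s * ∏ c ∈ {(s.1 + 1, s.2), (s.1, s.2 + 1)} ∩ outers Y, g c =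
      (∏ c ∈ addables Y, g c) * (g (s.1 + 1, s.2) * g (s.1, s.2 + 1)) := by
  have hdisj := (disjoint_addables_succ (mem_addables_iff.mp hs).1).mono_left (erase_subset s _)
  rw [addables_of_cells_eq_insert hs hY', prod_union (hdisj.mono_right sdiff_subset),
    ← prod_erase_mul _ _ hs, ← prod_pair (by simp),
    ← prod_inter_mul_prod_sdiff ({(s.1 + 1, s.2), (s.1, s.2 + 1)} : Finset _) (outers Y)]
  ac_rfl

@[to_additive]
theorem prod_erase_outers_of_cells_eq_insert {M : Type*} [CommMonoid M] (g : ℕ × ℕ → M)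
    (hs : s ∉ Y) (hY' : Y'.cells = insert s Y.cells) :
    (∏ c ∈ (outers Y').erase (s.1 + 1, s.2 + 1), g c) *
        ∏ c ∈ {(s.1 + 1, s.2), (s.1, s.2 + 1)} ∩ outers Y, g c =
      ∏ c ∈ outers Y, g c := by
  rw [outers_of_cells_eq_insert hs hY',
    erase_insert fun h => add_one_add_one_notMem_outers hs (mem_sdiff.mp h).1,
    mul_comm, inter_comm, prod_inter_mul_prod_sdiff]

end AddBox

theorem YoungDiagram.exists_cells_eq_insert {Y : YoungDiagram} (hY : Y.cells.Nonempty) :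
    ∃ (Y₀ : YoungDiagram) (s : ℕ × ℕ), s ∈ addables Y₀ ∧ Y.cells = insert s Y₀.cells ∧
      #Y₀.cells < #Y.cells := by
  obtain ⟨r, hr, hmax⟩ := Y.cells.exists_maximal hY
  have hlower : IsLowerSet (↑(Y.cells.erase r) : Set (ℕ × ℕ)) := by
    intro a b hba ha
    simp only [coe_erase, Set.mem_sdiff, mem_coe, Set.mem_singleton_iff] at ha ⊢
    exact ⟨Y.isLowerSet hba ha.1, fun hbr => ha.2 (le_antisymm (hmax ha.1 (hbr ▸ hba)) (hbr ▸ hba))⟩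
  refine ⟨⟨Y.cells.erase r, hlower⟩, r, ?_, (insert_erase hr).symm, card_erase_lt_of_mem hr⟩
  have hpred : ∀ c ≤ r, c ≠ r → c ∈ (⟨Y.cells.erase r, hlower⟩ : YoungDiagram) := fun c hc hne =>
    (YoungDiagram.mem_mk _ _ _).mpr (mem_erase.mpr ⟨hne, Y.isLowerSet hc hr⟩)
  refine mem_addables_iff.mpr ⟨by simp [YoungDiagram.mem_mk], ?_, ?_⟩
  · refine or_iff_not_imp_left.mpr fun h => hpred _ ⟨Nat.sub_le _ _, le_rfl⟩ ?_
    simp [Prod.ext_iff]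
    omega
  · refine or_iff_not_imp_left.mpr fun h => hpred _ ⟨le_rfl, Nat.sub_le _ _⟩ ?_
    simp [Prod.ext_iff]
    omega

theorem YoungDiagram.induction_on_insert {P : YoungDiagram → Prop} (bot : P ⊥)
    (step : ∀ Y Y' s, s ∈ addables Y → Y'.cells = insert s Y.cells → P Y → P Y')
    (Y : YoungDiagram) : P Y := by
  induction hn : #Y.cells using Nat.strong_induction_on generalizing Y with
  | _ n ih =>
    rcases Y.cells.eq_empty_or_nonempty with h | h
    · convert bot
      exact YoungDiagram.ext (h.trans YoungDiagram.cells_bot.symm)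
    · obtain ⟨Y₀, s, hs, hY, hlt⟩ := YoungDiagram.exists_cells_eq_insert h
      exact step Y₀ Y s hs hY (ih _ (hn ▸ hlt) Y₀ rfl)

theorem sum_addables_sub_sum_outers {M : Type*} [AddCommGroup M] (f : ℕ × ℕ → M)
    (hf : ∀ i j, f (i + 1, j) + f (i, j + 1) = f (i, j) + f (i + 1, j + 1)) (Y : YoungDiagram) :
    ∑ c ∈ addables Y, f c - ∑ c ∈ outers Y, f c = f (0, 0) := by
  induction Y using YoungDiagram.induction_on_insert with
  | bot => simp [addables_bot, outers_bot]
  | step Y Y' s hs hY' ih =>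
    have hA := sum_addables_of_cells_eq_insert f hs hY'
    have hR := sum_erase_outers_of_cells_eq_insert f (mem_addables_iff.mp hs).1 hY'
    have hs' : (s.1 + 1, s.2 + 1) ∈ outers Y' := by
      simp [outers_of_cells_eq_insert (mem_addables_iff.mp hs).1 hY']
    rw [← sum_erase_add _ _ hs', ← ih, ← hR, eq_sub_of_add_eq hA.symm, hf]
    abel

theorem card_addables (Y : YoungDiagram) : #(addables Y) = #(outers Y) + 1 := by
  have h := sum_addables_sub_sum_outers (fun _ => (1 : ℤ)) (fun _ _ => rfl) Y
  simp only [sum_const, nsmul_eq_mul, mul_one] at h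
  omega

theorem sum_content_addables (Y : YoungDiagram) :
    ∑ a ∈ addables Y, content a = ∑ t ∈ outers Y, content t := by
  have h := sum_addables_sub_sum_outers content (fun i j => by simp [content]; ring) Y
  rwa [show content (0, 0) = 0 by simp [content], sub_eq_zero] at h

theorem sum_ttau_div_sub (Y : YoungDiagram) {v : Kf} (hv : ∀ t ∈ outers Y, v ≠ content t) :
    ∑ t ∈ outers Y, ttau Y t / (v - content t) =
      v - (∏ a ∈ addables Y, (v - content a)) / ∏ t ∈ outers Y, (v - content t) :=
  sum_neg_div_sub_eq_sub_div_prod content content content_injective.injOn (card_addables Y)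
    (sum_content_addables Y) hv

theorem ttau_of_cells_eq_insert {Y Y' : YoungDiagram} {s : ℕ × ℕ} (hs : s ∈ addables Y)
    (hY' : Y'.cells = insert s Y.cells) :
    ttau Y' (s.1 + 1, s.2 + 1) = hbar / (eps1 + eps2) *
      (∏ a ∈ addables Y, (content (s.1 + 1, s.2 + 1) - content a)) /
        ∏ t ∈ outers Y, (content (s.1 + 1, s.2 + 1) - content t) := by
  rw [ttau]
  set g : ℕ × ℕ → Kf := fun c => content (s.1 + 1, s.2 + 1) - content c
  have hA := prod_addables_of_cells_eq_insert g hs hY'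
  have hR := prod_erase_outers_of_cells_eq_insert g (mem_addables_iff.mp hs).1 hY'
  have hgs : g s = eps1 + eps2 := by simp [g, content]; ring
  have hgx : g (s.1 + 1, s.2) = eps2 := by simp [g, content]; ring
  have hgy : g (s.1, s.2 + 1) = eps1 := by simp [g, content]; ring
  have hI : ∏ c ∈ {(s.1 + 1, s.2), (s.1, s.2 + 1)} ∩ outers Y, g c ≠ 0 := by
    refine prod_ne_zero_iff.mpr fun c hc => content_sub_ne_zero ?_
    rcases mem_insert.mp (mem_inter.mp hc).1 with rfl | hc
    · simp
    · simp [mem_singleton.mp hc]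
  have hE : ∏ c ∈ (outers Y').erase (s.1 + 1, s.2 + 1), g c ≠ 0 :=
    prod_ne_zero_iff.mpr fun c hc => content_sub_ne_zero (ne_of_mem_erase hc).symm
  rw [hgs, hgx, hgy] at hA
  rw [← hR, hbar]
  have hε := eps1_add_eps2_ne_zero
  field_simp
  linear_combination -hA

/-- for a partition `λ` and an addable box `s ∈ A_λ`, the
transition/co-transition measures satisfy
`Σ_{t∈R⁺_λ} ℏ·τ̃_λ^t/([s-t]·[s-t+(1,1)]) = -ℏ + τ̃_{λ+s}^{s+(1,1)}`, where `λ+s` is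
the Young diagram `λ` with the box `s` inserted. -/
theorem ttau_sum_identity (Y Y' : YoungDiagram) (s : ℕ × ℕ)
    (hs : s ∈ addables Y) (hY' : Y'.cells = insert s Y.cells) :
    ∑ t ∈ outers Y,
        hbar * ttau Y t /
          ((content s - content t) * (content s - content t + eps1 + eps2)) =
      -hbar + ttau Y' (s.1 + 1, s.2 + 1) := by
  have hv : ∀ t ∈ outers Y, content s ≠ content t := fun t ht =>
    content_injective.ne fun h => disjoint_left.mp (disjoint_addables_outers Y) hs (h ▸ ht)
  have hv' : ∀ t ∈ outers Y, content (s.1 + 1, s.2 + 1) ≠ content t := fun t ht =>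
    content_injective.ne fun h =>
      add_one_add_one_notMem_outers (mem_addables_iff.mp hs).1 (h ▸ ht)
  have hshift : content (s.1 + 1, s.2 + 1) = content s + eps1 + eps2 := by
    simp [content]; ring
  have hε := eps1_add_eps2_ne_zero
  calc ∑ t ∈ outers Y, hbar * ttau Y t /
          ((content s - content t) * (content s - content t + eps1 + eps2))
      = hbar / (eps1 + eps2) * (∑ t ∈ outers Y, ttau Y t / (content s - content t) -
          ∑ t ∈ outers Y, ttau Y t / (content (s.1 + 1, s.2 + 1) - content t)) := by
        rw [← sum_sub_distrib, mul_sum]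
        refine sum_congr rfl fun t ht => ?_
        have hu := sub_ne_zero.mpr (hv t ht)
        have hw := sub_ne_zero.mpr (hv' t ht)
        rw [hshift, add_sub_right_comm, add_sub_right_comm] at hw ⊢
        generalize content s - content t = u at hu hw ⊢
        field_simp
        ring
    _ = -hbar + ttau Y' (s.1 + 1, s.2 + 1) := by
        rw [sum_ttau_div_sub Y hv, sum_ttau_div_sub Y hv', prod_eq_zero hs (sub_self _),
          ttau_of_cells_eq_insert hs hY', hshift]
        field_simp
        ring

end
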